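/- For λ < 0, the skew normal cdf satisfies F(z) ~ √(2/π) |z|^{-1} e^{-z²/2} as z → -∞; that is, the left tail is asymptotically twice the standard normal left tail. -/

import Mathlib

open Real MeasureTheory Filter Set

noncomputable def stdNormalPdf (t : ℝ) : ℝ := (Real.sqrt (2 * π))⁻¹ * Real.exp (-t ^ 2 / 2)

noncomputable def stdNormalCdf (z : ℝ) : ℝ := ∫ t in Set.Iic z, stdNormalPdf t

noncomputable def skewNormalCdf (l z : ℝ) : ℝ :=
  ∫ t in Set.Iic z, 2 * stdNormalPdf t * stdNormalCdf (l * t)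

/-!
The denominator is `2 φ(z) / |z|`. Both it and `F` vanish at `-∞`, so L'Hôpital's rule applies.
Since `φ' = -z φ`, the derivatives are `2 φ(z) Φ(λ z)` and `2 φ(z) (1 + z⁻²)`, whose ratio
`Φ(λ z) / (1 + z⁻²)` tends to `1` because `λ z → +∞`.
-/

open scoped Topology
open ProbabilityTheory

section IntegralIic

variable {E : Type*} [NormedAddCommGroup E] [NormedSpace ℝ E] {f : ℝ → E}

theorem hasDerivAt_integral_Iic [CompleteSpace E] (hf : Integrable f) {z : ℝ}
    (hz : ContinuousAt f z) :
    HasDerivAt (fun x => ∫ t in Iic x, f t) (f z) z := by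
  have hsplit : (fun x => ∫ t in Iic x, f t) =
      fun x => (∫ t in Iic 0, f t) + ∫ t in (0 : ℝ)..x, f t := by
    funext x
    rw [← intervalIntegral.integral_Iic_sub_Iic hf.integrableOn hf.integrableOn]
    abel
  rw [hsplit]
  exact (intervalIntegral.integral_hasDerivAt_right hf.intervalIntegrable
    hf.aestronglyMeasurable.stronglyMeasurableAtFilter hz).const_add _

theorem tendsto_integral_Iic_atTop (hf : Integrable f) :
    Tendsto (fun x => ∫ t in Iic x, f t) atTop (𝓝 (∫ t, f t)) :=
  (aecover_Iic tendsto_id).integral_tendsto_of_countably_generated hf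

end IntegralIic

theorem stdNormalPdf_eq_gaussianPDFReal : stdNormalPdf = gaussianPDFReal 0 1 := by
  funext t
  simp [stdNormalPdf, gaussianPDFReal]

theorem stdNormalPdf_pos (t : ℝ) : 0 < stdNormalPdf t := by
  unfold stdNormalPdf
  positivity

theorem continuous_stdNormalPdf : Continuous stdNormalPdf := by
  unfold stdNormalPdf
  fun_prop

theorem integrable_stdNormalPdf : Integrable stdNormalPdf :=
  stdNormalPdf_eq_gaussianPDFReal ▸ integrable_gaussianPDFReal 0 1

theorem integral_stdNormalPdf : ∫ t, stdNormalPdf t = 1 :=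
  stdNormalPdf_eq_gaussianPDFReal ▸ integral_gaussianPDFReal_eq_one 0 one_ne_zero

theorem hasDerivAt_stdNormalPdf (t : ℝ) : HasDerivAt stdNormalPdf (-t * stdNormalPdf t) t := by
  have hexp : HasDerivAt (fun x : ℝ => -x ^ 2 / 2) (-t) t := by
    refine ((hasDerivAt_pow 2 t).neg.div_const 2).congr_deriv ?_
    push_cast
    ring
  exact (hexp.exp.const_mul _).congr_deriv (by rw [stdNormalPdf]; ring)

theorem tendsto_stdNormalPdf_atBot : Tendsto stdNormalPdf atBot (𝓝 0) := by
  have hsq : Tendsto (fun x : ℝ => x ^ 2) atBot atTop := by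
    simpa [Function.comp_def] using
      (tendsto_pow_atTop (α := ℝ) two_ne_zero).comp tendsto_neg_atBot_atTop
  have hexp := (tendsto_neg_atTop_atBot (G := ℝ)).comp hsq |>.atBot_div_const (r := 2) two_pos
  have h := (tendsto_exp_atBot.comp hexp).const_mul (√(2 * π))⁻¹
  rw [mul_zero] at h
  exact h

theorem sqrt_two_div_pi_mul_exp (t : ℝ) :
    √(2 / π) * exp (-t ^ 2 / 2) = 2 * stdNormalPdf t := by
  have h : √(2 / π) = 2 * (√(2 * π))⁻¹ := by
    rw [eq_mul_inv_iff_mul_eq₀ (by positivity), ← sqrt_mul (by positivity),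
      show 2 / π * (2 * π) = 2 ^ 2 by field_simp, sqrt_sq zero_le_two]
  rw [h, stdNormalPdf]
  ring

theorem hasDerivAt_stdNormalCdf (z : ℝ) : HasDerivAt stdNormalCdf (stdNormalPdf z) z :=
  hasDerivAt_integral_Iic integrable_stdNormalPdf continuous_stdNormalPdf.continuousAt

theorem continuous_stdNormalCdf : Continuous stdNormalCdf :=
  continuous_iff_continuousAt.2 fun z => (hasDerivAt_stdNormalCdf z).continuousAt

theorem stdNormalCdf_nonneg (z : ℝ) : 0 ≤ stdNormalCdf z :=
  setIntegral_nonneg measurableSet_Iic fun t _ => (stdNormalPdf_pos t).le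

theorem stdNormalCdf_le_one (z : ℝ) : stdNormalCdf z ≤ 1 :=
  integral_stdNormalPdf ▸ setIntegral_le_integral integrable_stdNormalPdf
    (Eventually.of_forall fun t => (stdNormalPdf_pos t).le)

theorem tendsto_stdNormalCdf_atTop : Tendsto stdNormalCdf atTop (𝓝 1) :=
  integral_stdNormalPdf ▸ tendsto_integral_Iic_atTop integrable_stdNormalPdf

noncomputable def skewNormalPdf (l t : ℝ) : ℝ := 2 * stdNormalPdf t * stdNormalCdf (l * t)

theorem continuous_skewNormalPdf (l : ℝ) : Continuous (skewNormalPdf l) :=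
  (continuous_const.mul continuous_stdNormalPdf).mul
    (continuous_stdNormalCdf.comp (continuous_const_mul l))

theorem integrable_skewNormalPdf (l : ℝ) : Integrable (skewNormalPdf l) := by
  refine (integrable_stdNormalPdf.const_mul 2).mul_bdd (c := 1)
    (continuous_stdNormalCdf.comp (continuous_const_mul l)).aestronglyMeasurable
    (ae_of_all _ fun t => ?_)
  rw [norm_of_nonneg (stdNormalCdf_nonneg _)]
  exact stdNormalCdf_le_one _

theorem hasDerivAt_skewNormalCdf (l z : ℝ) : HasDerivAt (skewNormalCdf l) (skewNormalPdf l z) z :=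
  hasDerivAt_integral_Iic (integrable_skewNormalPdf l) (continuous_skewNormalPdf l).continuousAt

theorem tendsto_skewNormalCdf_atBot (l : ℝ) : Tendsto (skewNormalCdf l) atBot (𝓝 0) :=
  tendsto_integral_Iic_zero tendsto_id

theorem hasDerivAt_stdNormalPdf_div_abs {z : ℝ} (hz : z < 0) :
    HasDerivAt (fun x => stdNormalPdf x / |x|) (stdNormalPdf z * (1 + z⁻¹ ^ 2)) z := by
  refine ((hasDerivAt_stdNormalPdf z).div (hasDerivAt_abs_neg hz)
    (abs_ne_zero.2 hz.ne)).congr_deriv ?_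
  have hz0 := hz.ne
  rw [abs_of_neg hz]
  field_simp
  ring

theorem tendsto_stdNormalPdf_div_abs_atBot :
    Tendsto (fun x => stdNormalPdf x / |x|) atBot (𝓝 0) := by
  simpa only [div_eq_mul_inv, mul_zero, Function.comp_def] using tendsto_stdNormalPdf_atBot.mul
    (tendsto_inv_atTop_zero.comp tendsto_abs_atBot_atTop)

theorem tendsto_skewNormalPdf_div_atBot {l : ℝ} (hl : l < 0) :
    Tendsto (fun z => skewNormalPdf l z / (2 * (stdNormalPdf z * (1 + z⁻¹ ^ 2)))) atBot
      (𝓝 1) := by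
  have hratio (z : ℝ) : skewNormalPdf l z / (2 * (stdNormalPdf z * (1 + z⁻¹ ^ 2))) =
      stdNormalCdf (l * z) / (1 + z⁻¹ ^ 2) := by
    have := stdNormalPdf_pos z
    unfold skewNormalPdf
    field_simp
  have hnum : Tendsto (fun z => stdNormalCdf (l * z)) atBot (𝓝 1) :=
    tendsto_stdNormalCdf_atTop.comp (tendsto_id.const_mul_atBot_of_neg hl)
  have hden : Tendsto (fun z : ℝ => 1 + z⁻¹ ^ 2) atBot (𝓝 1) := by
    simpa using (tendsto_const_nhds (x := (1 : ℝ))).add (tendsto_inv_atBot_zero.pow 2)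
  simpa only [hratio, div_one, Pi.div_def] using hnum.div hden one_ne_zero

/-- For l < 0, F(z) ~ √(2/π) |z|⁻¹ e^{-z²/2} as z → -∞ (twice the standard normal tail). -/
theorem skewNormalCdf_tail_equiv_neg (l : ℝ) (hl : l < 0) :
    Tendsto (fun z : ℝ =>
      skewNormalCdf l z /
        (Real.sqrt (2 / π) * |z|⁻¹ * Real.exp (-z ^ 2 / 2)))
      atBot (nhds 1) := by
  have hden (z : ℝ) : √(2 / π) * |z|⁻¹ * exp (-z ^ 2 / 2) = 2 * (stdNormalPdf z / |z|) := by
    rw [mul_right_comm, sqrt_two_div_pi_mul_exp]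
    ring
  simp_rw [hden]
  refine HasDerivAt.lhopital_zero_atBot (g' := fun z => 2 * (stdNormalPdf z * (1 + z⁻¹ ^ 2)))
    (Eventually.of_forall (hasDerivAt_skewNormalCdf l)) ?_ ?_ (tendsto_skewNormalCdf_atBot l)
    (by simpa using tendsto_stdNormalPdf_div_abs_atBot.const_mul 2)
    (tendsto_skewNormalPdf_div_atBot hl)
  · filter_upwards [eventually_lt_atBot 0] with z hz
    exact (hasDerivAt_stdNormalPdf_div_abs hz).const_mul 2
  · exact Eventually.of_forall fun z => by have := stdNormalPdf_pos z; positivity
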